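/- Let α_1,…,α_{n−1}, β_1,…,β_{n−1} be any integers with h_i = α_i d_i + β_i f_i for all i = 1,…,n−1. Then the binomial G vanishes identically on V: for every u = (u_1,…,u_n) ∈ K^n, evaluating G at the point φ(u) gives 0. -/
import Mathlib


open MvPolynomial

lemma toric_aux {K : Type*} [CommRing K] (m : ℕ) (uN : K) (v : Fin m → K)
    (d f g h : Fin m → ℕ) (α β : Fin m → ℤ)
    (hbez : ∀ i, (h i : ℤ) = α i * d i + β i * f i) :
    (uN ^ (-(∑ i, β i * g i)).toNat * ∏ x, (v x ^ d x) ^ (α x).toNat)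
        * ∏ x, (v x ^ f x * uN ^ g x) ^ (β x).toNat
      = ((∏ j, v j ^ h j) * uN ^ (∑ i, β i * g i).toNat
            * ∏ x, (v x ^ d x) ^ (-α x).toNat)
        * ∏ x, (v x ^ f x * uN ^ g x) ^ (-β x).toNat := by
  have hE : ∀ x, d x * (α x).toNat + f x * (β x).toNat
      = h x + (d x * (-α x).toNat + f x * (-β x).toNat) := by
    intro x
    have hb := hbez x
    have h1 : ((α x).toNat : ℤ) = α x + ((-α x).toNat : ℤ) := by omega
    have h2 : ((β x).toNat : ℤ) = β x + ((-β x).toNat : ℤ) := by omega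
    have : ((d x : ℤ)) * (α x).toNat + (f x : ℤ) * (β x).toNat
        = (h x : ℤ) + ((d x : ℤ) * (-α x).toNat + (f x : ℤ) * (-β x).toNat) := by
      rw [h1, h2, hb]; ring
    exact_mod_cast this
  have hA : (-(∑ i, β i * g i)).toNat + ∑ x, g x * (β x).toNat
      = (∑ i, β i * g i).toNat + ∑ x, g x * (-β x).toNat := by
    have h2 : ∀ x : Fin m, ((β x).toNat : ℤ) = β x + ((-β x).toNat : ℤ) := fun x => by omega
    have : ((-(∑ i, β i * g i)).toNat : ℤ) + ∑ x, (g x : ℤ) * (β x).toNat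
        = ((∑ i, β i * g i).toNat : ℤ) + ∑ x, (g x : ℤ) * (-β x).toNat := by
      simp only [h2, mul_add, Finset.sum_add_distrib]
      have hc : ((-(∑ i, β i * g i)).toNat : ℤ)
          = -(∑ i, β i * g i) + ((∑ i, β i * g i).toNat : ℤ) := by omega
      rw [hc]
      have : ∑ x, (g x : ℤ) * β x = ∑ i, β i * (g i : ℤ) := by
        exact Finset.sum_congr rfl fun x _ => mul_comm _ _
      rw [this]; ring
    exact_mod_cast this
  calc (uN ^ (-(∑ i, β i * g i)).toNat * ∏ x, (v x ^ d x) ^ (α x).toNat)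
        * ∏ x, (v x ^ f x * uN ^ g x) ^ (β x).toNat
      = uN ^ ((-(∑ i, β i * g i)).toNat + ∑ x, g x * (β x).toNat)
        * ∏ x, v x ^ (d x * (α x).toNat + f x * (β x).toNat) := by
        simp only [pow_add, mul_pow, ← pow_mul, Finset.prod_mul_distrib,
          Finset.prod_pow_eq_pow_sum]
        ring
    _ = uN ^ ((∑ i, β i * g i).toNat + ∑ x, g x * (-β x).toNat)
        * ∏ x, v x ^ (h x + (d x * (-α x).toNat + f x * (-β x).toNat)) := by
        rw [hA]
        congr 1
        exact Finset.prod_congr rfl fun x _ => by rw [hE x]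
    _ = ((∏ j, v j ^ h j) * uN ^ (∑ i, β i * g i).toNat
            * ∏ x, (v x ^ d x) ^ (-α x).toNat)
        * ∏ x, (v x ^ f x * uN ^ g x) ^ (-β x).toNat := by
        simp only [pow_add, mul_pow, ← pow_mul, Finset.prod_mul_distrib,
          Finset.prod_pow_eq_pow_sum]
        ring


/-- The parametrization map `φ : K^n → K^{2n}` of the toric variety `V`. -/
noncomputable def phiMap {K : Type*} [Field K] (n : ℕ)
    (d f g h : Fin (n - 1) → ℕ) (u : Fin n → K) : Fin n ⊕ Fin n → K :=
  Sum.elim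
    (fun i => if hi : i.1 < n - 1 then u i ^ d ⟨i.1, hi⟩ else u i)
    (fun i =>
      if hi : i.1 < n - 1 then
        u i ^ f ⟨i.1, hi⟩ * u ⟨n - 1, by have := i.isLt; omega⟩ ^ g ⟨i.1, hi⟩
      else ∏ j : Fin (n - 1), u (Fin.castLE (by omega) j) ^ h j)

/-- The last index of `Fin n` (corresponding to the variables `x_n`, `y_n`). -/
def lastIdx (n : ℕ) (hn : 0 < n) : Fin n := ⟨n - 1, by omega⟩

/-- `G = x_n^{(-c)⁺} ∏_{αᵢ ≥ 0} x_i^{α_i} ∏_{βᵢ ≥ 0} y_i^{β_i}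
        - y_n x_n^{c⁺} ∏_{αᵢ < 0} x_i^{-α_i} ∏_{βᵢ < 0} y_i^{-β_i}`,
where `c = ∑ β_i g_i`. -/
noncomputable def Gpoly (K : Type*) [Field K] (n : ℕ) (hn : 0 < n)
    (g : Fin (n - 1) → ℕ) (α β : Fin (n - 1) → ℤ) : MvPolynomial (Fin n ⊕ Fin n) K :=
  X (Sum.inl (lastIdx n hn)) ^ (-(∑ i, β i * g i)).toNat
      * (∏ i : Fin (n - 1), X (Sum.inl (Fin.castLE (by omega) i)) ^ (α i).toNat)
      * (∏ i : Fin (n - 1), X (Sum.inr (Fin.castLE (by omega) i)) ^ (β i).toNat)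
    - X (Sum.inr (lastIdx n hn))
      * X (Sum.inl (lastIdx n hn)) ^ (∑ i, β i * g i).toNat
      * (∏ i : Fin (n - 1), X (Sum.inl (Fin.castLE (by omega) i)) ^ (-(α i)).toNat)
      * (∏ i : Fin (n - 1), X (Sum.inr (Fin.castLE (by omega) i)) ^ (-(β i)).toNat)

/-- The binomial `G` vanishes identically on `V`. -/
theorem toric_G_vanishes_on_V
    (K : Type*) [Field K] [IsAlgClosed K]
    (n : ℕ) (hn : 3 ≤ n)
    (d f g h : Fin (n - 1) → ℕ)
    (hd : ∀ i, 0 < d i) (hf : ∀ i, 0 < f i) (hg : ∀ i, 0 < g i) (hh : ∀ i, 0 < h i)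
    (hdf : ∀ i, Nat.Coprime (d i) (f i))
    (hdh : ∀ i, Nat.Coprime (d i) (h i))
    (hdd : ∀ i j, i ≠ j → Nat.Coprime (d i) (d j))
    (α β : Fin (n - 1) → ℤ)
    (hbez : ∀ i, (h i : ℤ) = α i * d i + β i * f i) :
    ∀ u : Fin n → K,
      MvPolynomial.eval (phiMap n d f g h u) (Gpoly K n (by omega) g α β) = 0 := by
  intro u
  simp only [Gpoly, phiMap, map_sub, map_mul, map_pow, eval_prod, eval_X, Sum.elim_inl,
    Sum.elim_inr, lastIdx, Fin.coe_castLE, Fin.is_lt, dif_pos, lt_irrefl, dif_neg,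
    not_false_iff, Fin.eta]
  rw [sub_eq_zero]
  exact toric_aux (n - 1) (u ⟨n - 1, by omega⟩) (fun x => u (Fin.castLE (by omega) x))
    d f g h α β hbez
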